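/- arXiv:1602.04008 — 2 statements merged into one kernel-verified Lean document; each statement's English description precedes it below -/
import Mathlib

section
/- The Laguerre functions 𝓛_n(x) = L_n(x) e^{-x/2}, n ∈ ℕ, form an orthonormal family in L²(0,∞): ∫_0^∞ 𝓛_n(x) 𝓛_m(x) dx = δ_{nm}. -/
open MeasureTheory

/-- The n-th Laguerre polynomial. -/
noncomputable def laguerre (n : ℕ) (x : ℝ) : ℝ :=
  ∑ k ∈ Finset.range (n + 1), (n.choose k : ℝ) * (-x) ^ k / (Nat.factorial k : ℝ)

/-- The n-th Laguerre function `𝓛_n(x) = L_n(x) e^{-x/2}`. -/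
noncomputable def lagFun (n : ℕ) (x : ℝ) : ℝ := laguerre n x * Real.exp (-x / 2)

/-!
Since `𝓛_n 𝓛_m = L_m L_n e^{-x}`, expanding `L_m` in monomials reduces the claim to the
moments `∫_0^∞ L_n(x) x^k e^{-x} dx`. Expanding `L_n` as well and using `∫_0^∞ x^p e^{-x} dx = p!`
together with Vandermonde's identity, these equal `(-1)^n k! C(k, n)`; in particular `L_n` is
orthogonal to every polynomial of degree `< n`. Pairing the moments with the coefficients
`(-1)^k C(m, k) / k!` of `L_m`, the inversion formula `∑_k (-1)^k C(m, k) C(k, n) = (-1)^n δ_{nm}`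
finishes the proof.
-/

open Finset Real Nat

theorem Int.alternating_sum_range_choose_mul_choose (n t : ℕ) :
    ∑ k ∈ Finset.range (n + 1), (-1 : ℤ) ^ k * n.choose k * k.choose t =
      if t = n then (-1) ^ n else 0 := by
  rcases lt_or_ge n t with hnt | htn
  · rw [if_neg hnt.ne']
    refine sum_eq_zero fun k hk => ?_
    rw [Nat.choose_eq_zero_of_lt (n := k) (by grind), Nat.cast_zero, mul_zero]
  have below : ∑ k ∈ Finset.range t, (-1 : ℤ) ^ k * n.choose k * k.choose t = 0 :=
    sum_eq_zero fun k hk => by rw [Nat.choose_eq_zero_of_lt (mem_range.mp hk)]; simp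
  have shifted (j : ℕ) : (-1 : ℤ) ^ (t + j) * n.choose (t + j) * (t + j).choose t =
      (-1) ^ t * n.choose t * ((-1) ^ j * (n - t).choose j) := by
    have h := Nat.choose_mul (n := n) (Nat.le_add_right t j)
    rw [Nat.add_sub_cancel_left] at h
    rw [pow_add, mul_assoc _ (n.choose (t + j) : ℤ), ← Nat.cast_mul, h, Nat.cast_mul]
    ring
  rw [(by omega : n + 1 = t + (n - t + 1)), sum_range_add, below, zero_add,
    sum_congr rfl fun j _ => shifted j, ← mul_sum, Int.alternating_sum_range_choose]
  rcases eq_or_ne t n with rfl | hne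
  · simp
  · rw [if_neg (by omega), if_neg hne, mul_zero]

theorem Int.alternating_sum_range_choose_mul_add_choose (n k : ℕ) :
    ∑ j ∈ Finset.range (n + 1), (-1 : ℤ) ^ j * n.choose j * (j + k).choose k =
      (-1) ^ n * k.choose n := by
  have vandermonde (j : ℕ) :
      ((j + k).choose k : ℤ) = ∑ b ∈ Finset.range (k + 1), (k.choose b : ℤ) * j.choose b := by
    rw [Nat.add_choose_eq, Nat.sum_antidiagonal_eq_sum_range_succ_mk]
    push_cast
    refine sum_congr rfl fun b hb => ?_
    rw [Nat.choose_symm (mem_range_succ_iff.mp hb), mul_comm]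
  calc ∑ j ∈ Finset.range (n + 1), (-1 : ℤ) ^ j * n.choose j * (j + k).choose k
      = ∑ b ∈ Finset.range (k + 1), (k.choose b : ℤ) *
          ∑ j ∈ Finset.range (n + 1), (-1 : ℤ) ^ j * n.choose j * j.choose b := by
        simp_rw [vandermonde, mul_sum, sum_comm (s := Finset.range (n + 1))]
        refine sum_congr rfl fun b _ => sum_congr rfl fun j _ => by ring
    _ = (-1) ^ n * k.choose n := by
        simp_rw [Int.alternating_sum_range_choose_mul_choose, mul_ite, mul_zero, sum_ite_eq',
          mem_range]
        split_ifs with h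
        · ring
        · rw [Nat.choose_eq_zero_of_lt (by omega)]; simp

theorem integrableOn_pow_mul_exp_neg_Ioi (p : ℕ) :
    IntegrableOn (fun x : ℝ => x ^ p * exp (-x)) (Set.Ioi 0) := by
  refine (GammaIntegral_convergent (s := p + 1) (by positivity)).congr_fun
    (fun x _ => ?_) measurableSet_Ioi
  dsimp only
  rw [add_sub_cancel_right, rpow_natCast, mul_comm]

theorem integral_pow_mul_exp_neg_Ioi (p : ℕ) :
    ∫ x in Set.Ioi (0 : ℝ), x ^ p * exp (-x) = p ! := by
  rw [← Real.Gamma_nat_eq_factorial, Gamma_eq_integral (by positivity)]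
  refine setIntegral_congr_fun measurableSet_Ioi fun x _ => ?_
  rw [add_sub_cancel_right, rpow_natCast, mul_comm]

theorem laguerre_eq_sum (n : ℕ) (x : ℝ) :
    laguerre n x = ∑ j ∈ range (n + 1), (-1) ^ j * n.choose j / j ! * x ^ j := by
  refine sum_congr rfl fun j _ => ?_
  rw [neg_pow]
  ring

section LaguerreIntegral

variable {μ : Measure ℝ} {g : ℝ → ℝ}

theorem integrable_laguerre_mul (n : ℕ) (hg : ∀ j : ℕ, Integrable (fun x => x ^ j * g x) μ) :
    Integrable (fun x => laguerre n x * g x) μ := by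
  simp_rw [laguerre_eq_sum, sum_mul, mul_assoc]
  exact integrable_finsetSum _ fun j _ => (hg j).const_mul _

theorem integral_laguerre_mul (n : ℕ) (hg : ∀ j : ℕ, Integrable (fun x => x ^ j * g x) μ) :
    ∫ x, laguerre n x * g x ∂μ =
      ∑ j ∈ range (n + 1), (-1) ^ j * n.choose j / j ! * ∫ x, x ^ j * g x ∂μ := by
  simp_rw [laguerre_eq_sum, sum_mul, mul_assoc]
  rw [integral_finsetSum _ fun j _ => (hg j).const_mul _]
  simp_rw [integral_const_mul]

end LaguerreIntegral

theorem integrableOn_pow_mul_pow_mul_exp_neg_Ioi (j k : ℕ) :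
    IntegrableOn (fun x : ℝ => x ^ j * (x ^ k * exp (-x))) (Set.Ioi 0) := by
  simpa only [pow_add, mul_assoc] using integrableOn_pow_mul_exp_neg_Ioi (j + k)

theorem integrableOn_laguerre_mul_pow_mul_exp_neg_Ioi (n k : ℕ) :
    IntegrableOn (fun x => laguerre n x * (x ^ k * exp (-x))) (Set.Ioi 0) :=
  integrable_laguerre_mul n fun j => integrableOn_pow_mul_pow_mul_exp_neg_Ioi j k

theorem integral_laguerre_mul_pow_mul_exp_neg_Ioi (n k : ℕ) :
    ∫ x in Set.Ioi 0, laguerre n x * (x ^ k * exp (-x)) = (-1) ^ n * k ! * k.choose n := by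
  have hcomb := congrArg (Int.cast : ℤ → ℝ) (Int.alternating_sum_range_choose_mul_add_choose n k)
  push_cast at hcomb
  rw [integral_laguerre_mul n fun j => integrableOn_pow_mul_pow_mul_exp_neg_Ioi j k]
  simp_rw [← mul_assoc, ← pow_add, integral_pow_mul_exp_neg_Ioi,
    ← Nat.add_choose_mul_factorial_mul_factorial _ k]
  calc ∑ j ∈ range (n + 1),
        (-1 : ℝ) ^ j * n.choose j / j ! * (((j + k).choose k * j ! * k ! : ℕ) : ℝ)
      = k ! * ∑ j ∈ range (n + 1), (-1 : ℝ) ^ j * n.choose j * (j + k).choose k := by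
        rw [mul_sum]
        refine sum_congr rfl fun j _ => ?_
        push_cast
        field_simp
    _ = (-1) ^ n * k ! * k.choose n := by rw [hcomb]; ring

/-- the Laguerre functions form an orthonormal family in `L²(0,∞)`:
`∫_0^∞ 𝓛_n 𝓛_m = δ_{nm}`. -/
theorem lagFun_orthonormal (n m : ℕ) :
    ∫ x in Set.Ioi (0 : ℝ), lagFun n x * lagFun m x = if n = m then 1 else 0 := by
  have hprod (x : ℝ) : lagFun n x * lagFun m x = laguerre m x * (laguerre n x * exp (-x)) := by
    rw [lagFun, lagFun, mul_mul_mul_comm, ← exp_add, add_halves]; ring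
  have hint (l : ℕ) : IntegrableOn (fun x => x ^ l * (laguerre n x * exp (-x))) (Set.Ioi 0) :=
    (integrableOn_laguerre_mul_pow_mul_exp_neg_Ioi n l).congr_fun
      (fun x _ => mul_left_comm _ _ _) measurableSet_Ioi
  have hcomb := congrArg (Int.cast : ℤ → ℝ) (Int.alternating_sum_range_choose_mul_choose m n)
  push_cast at hcomb
  simp_rw [hprod]
  rw [integral_laguerre_mul m hint]
  simp_rw [mul_left_comm _ (laguerre n _), integral_laguerre_mul_pow_mul_exp_neg_Ioi]
  calc ∑ l ∈ range (m + 1), (-1 : ℝ) ^ l * m.choose l / l ! * ((-1) ^ n * l ! * l.choose n)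
      = (-1) ^ n * ∑ l ∈ range (m + 1), (-1 : ℝ) ^ l * m.choose l * l.choose n := by
        rw [mul_sum]
        refine sum_congr rfl fun l _ => ?_
        field_simp
    _ = if n = m then 1 else 0 := by
        rw [hcomb]
        split_ifs with h
        · rw [h, ← pow_add, ← two_mul, pow_mul]; norm_num
        · rw [mul_zero]
end

section
/- For all x, y ∈ ℝ and all n ∈ ℕ, L_n^1(x+y) = Σ_{k=0}^{n} L_{n−k}(x) L_k(y), where L_n^1(x) = Σ_{k=0}^n (binom(n+1, n−k)) (−x)^k / k! and L_n is the n-th Laguerre polynomial; moreover L_n(t) = L_n^1(t) − L_{n−1}^1(t) for n ≥ 1. -/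
/-- The n-th generalized Laguerre polynomial of order 1:
`L_n^1(x) = Σ_{k=0}^n binom(n+1, n-k) (-x)^k / k!`. -/
noncomputable def laguerre1 (n : ℕ) (x : ℝ) : ℝ :=
  ∑ k ∈ Finset.range (n + 1), ((n + 1).choose (n - k) : ℝ) * (-x) ^ k / (Nat.factorial k : ℝ)

open Finset

private lemma key (i : ℕ) : ∀ n j : ℕ,
    ∑ k ∈ range (n+1), (n-k).choose i * k.choose j = (n+1).choose (i+j+1) := by
  intro n
  induction n with
  | zero =>
    intro j
    cases i <;> cases j <;>
      simp [Nat.choose_succ_succ, Nat.choose_eq_zero_of_lt, Nat.succ_lt_succ]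
  | succ n ih =>
    intro j
    rw [Finset.sum_range_succ']
    cases j with
    | zero =>
      simp only [Nat.choose_zero_right, mul_one, Nat.succ_sub_succ_eq_sub, Nat.sub_zero]
      have h1 := ih 0
      simp only [Nat.choose_zero_right, mul_one, Nat.add_zero] at h1
      rw [h1]
      have : i + 0 + 1 = i + 1 := by omega
      rw [this, Nat.choose_succ_succ (n+1) i, Nat.add_comm]
    | succ j =>
      simp only [Nat.succ_sub_succ_eq_sub]
      have hz : (0:ℕ).choose (j+1) = 0 := Nat.choose_eq_zero_of_lt (by omega)
      calc ∑ k ∈ range (n+1), (n-k).choose i * (k+1).choose (j+1)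
            + (n+1).choose i * (0:ℕ).choose (j+1)
          = ∑ k ∈ range (n+1), ((n-k).choose i * k.choose j
              + (n-k).choose i * k.choose (j+1)) := by
            rw [hz]
            simp [Nat.choose_succ_succ, mul_add]
        _ = (n+1).choose (i+j+1) + (n+1).choose (i+j+1+1) := by
            rw [Finset.sum_add_distrib, ih j, ih (j+1)]
            have h2 : i + (j+1) + 1 = i + j + 1 + 1 := by omega
            rw [h2]
        _ = (n+2).choose (i+(j+1)+1) := by
            have : i+(j+1)+1 = (i+j+1)+1 := by omega
            rw [this, Nat.choose_succ_succ (n+1) (i+j+1)]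

private lemma tri (n : ℕ) (g : ℕ → ℕ → ℝ) :
    ∑ m ∈ range (n+1), ∑ i ∈ range (m+1), g i (m - i)
      = ∑ i ∈ range (n+1), ∑ j ∈ range (n+1-i), g i j := by
  rw [Finset.sum_sigma', Finset.sum_sigma']
  refine sum_nbij' (fun x ↦ ⟨x.2, x.1 - x.2⟩) (fun x ↦ ⟨x.1 + x.2, x.1⟩) ?_ ?_ ?_ ?_ ?_
  · rintro ⟨a, b⟩ hab
    simp only [Finset.mem_sigma, Finset.mem_range] at *
    omega
  · rintro ⟨a, b⟩ hab
    simp only [Finset.mem_sigma, Finset.mem_range] at *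
    omega
  · rintro ⟨a, b⟩ hab
    simp only [Finset.mem_sigma, Finset.mem_range] at hab
    simp only [show b + (a - b) = a from by omega]
  · rintro ⟨a, b⟩ hab
    simp only [Finset.mem_sigma, Finset.mem_range] at hab
    simp only [show a + b - a = b from by omega]
  · rintro ⟨a, b⟩ hab
    rfl

private lemma laguerre_ext (n N : ℕ) (h : n ≤ N) (x : ℝ) :
    laguerre n x = ∑ i ∈ range (N+1), (n.choose i : ℝ) * (-x) ^ i / (Nat.factorial i : ℝ) := by
  rw [laguerre]
  apply Finset.sum_subset (Finset.range_subset_range.2 (by omega))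
  intro i _ hi
  simp only [Finset.mem_range, not_lt] at hi
  rw [Nat.choose_eq_zero_of_lt (by omega)]
  simp

private lemma choose_div_fact (m i : ℕ) (h : i ≤ m) :
    (m.choose i : ℝ) / (Nat.factorial m : ℝ)
      = 1 / ((Nat.factorial i : ℝ) * (Nat.factorial (m - i) : ℝ)) := by
  have hmf : (Nat.factorial m : ℝ) ≠ 0 := Nat.cast_ne_zero.2 (Nat.factorial_ne_zero m)
  have hif : (Nat.factorial i : ℝ) ≠ 0 := Nat.cast_ne_zero.2 (Nat.factorial_ne_zero i)
  have hmif : (Nat.factorial (m - i) : ℝ) ≠ 0 := Nat.cast_ne_zero.2 (Nat.factorial_ne_zero _)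
  have := Nat.choose_mul_factorial_mul_factorial h
  have hc : (m.choose i : ℝ) * (Nat.factorial i : ℝ) * (Nat.factorial (m - i) : ℝ)
      = (Nat.factorial m : ℝ) := by exact_mod_cast congrArg (Nat.cast (R := ℝ)) this
  field_simp
  linarith [hc]

/-- the addition formula `L_n^1(x+y) = Σ_{k=0}^n L_{n-k}(x) L_k(y)`
and the recurrence `L_n = L_n^1 - L_{n-1}^1` for `n ≥ 1`. -/
theorem laguerre1_addition_and_difference :
    (∀ (n : ℕ) (x y : ℝ),
      laguerre1 n (x + y) = ∑ k ∈ Finset.range (n + 1), laguerre (n - k) x * laguerre k y) ∧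
    (∀ n : ℕ, 1 ≤ n → ∀ t : ℝ, laguerre n t = laguerre1 n t - laguerre1 (n - 1) t) := by
  constructor
  · intro n x y
    set g : ℕ → ℕ → ℝ := fun i j =>
      (((n+1).choose (i+j+1) : ℝ)) * ((-x) ^ i / (Nat.factorial i : ℝ))
        * ((-y) ^ j / (Nat.factorial j : ℝ)) with hg
    have hL : laguerre1 n (x + y) = ∑ m ∈ range (n+1), ∑ i ∈ range (m+1), g i (m - i) := by
      rw [laguerre1]
      apply Finset.sum_congr rfl
      intro m hm
      rw [Finset.mem_range] at hm
      have hm' : m ≤ n := by omega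
      have hsymm : (n+1).choose (n - m) = (n+1).choose (m+1) := by
        have : n - m = (n+1) - (m+1) := by omega
        rw [this, Nat.choose_symm (by omega)]
      have hpow : (-(x+y)) ^ m = ∑ i ∈ range (m+1), (-x) ^ i * (-y) ^ (m - i) * (m.choose i) := by
        have : (-(x+y)) = (-x) + (-y) := by ring
        rw [this, add_pow]
      rw [hsymm, hpow, Finset.mul_sum, Finset.sum_div]
      apply Finset.sum_congr rfl
      intro i hi
      rw [Finset.mem_range] at hi
      have hi' : i ≤ m := by omega
      have hcd := choose_div_fact m i hi'
      rw [hg]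
      have : i + (m - i) + 1 = m + 1 := by omega
      simp only [this]
      have hcd' : (m.choose i : ℝ) * ((Nat.factorial i : ℝ) * (Nat.factorial (m - i) : ℝ))
          = (Nat.factorial m : ℝ) := by
        have h3 := Nat.choose_mul_factorial_mul_factorial hi'
        have h4 : (m.choose i : ℝ) * (Nat.factorial i : ℝ) * (Nat.factorial (m - i) : ℝ)
            = (Nat.factorial m : ℝ) := by exact_mod_cast congrArg (Nat.cast (R := ℝ)) h3
        linarith
      field_simp
      linear_combination ((((n+1).choose (m+1) : ℕ) : ℝ) * (-x) ^ i * (-y) ^ (m - i)) * hcd'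
    have hR : ∑ k ∈ range (n + 1), laguerre (n - k) x * laguerre k y
        = ∑ i ∈ range (n+1), ∑ j ∈ range (n+1), g i j := by
      have step1 : ∀ k ∈ range (n+1), laguerre (n - k) x * laguerre k y
          = ∑ i ∈ range (n+1), ∑ j ∈ range (n+1),
              ((n-k).choose i : ℝ) * (k.choose j : ℝ)
                * ((-x) ^ i / (Nat.factorial i : ℝ)) * ((-y) ^ j / (Nat.factorial j : ℝ)) := by
        intro k hk
        rw [Finset.mem_range] at hk
        rw [laguerre_ext (n-k) n (by omega) x, laguerre_ext k n (by omega) y,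
          Finset.sum_mul_sum]
        apply Finset.sum_congr rfl; intro i _
        apply Finset.sum_congr rfl; intro j _
        ring
      rw [Finset.sum_congr rfl step1, Finset.sum_comm]
      apply Finset.sum_congr rfl
      intro i _
      rw [Finset.sum_comm]
      apply Finset.sum_congr rfl
      intro j _
      have : ∑ k ∈ range (n+1), ((n-k).choose i : ℝ) * (k.choose j : ℝ)
                * ((-x) ^ i / (Nat.factorial i : ℝ)) * ((-y) ^ j / (Nat.factorial j : ℝ))
          = (↑(∑ k ∈ range (n+1), (n-k).choose i * k.choose j) : ℝ)
                * ((-x) ^ i / (Nat.factorial i : ℝ)) * ((-y) ^ j / (Nat.factorial j : ℝ)) := by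
        rw [Nat.cast_sum, Finset.sum_mul, Finset.sum_mul]
        apply Finset.sum_congr rfl
        intro k _
        push_cast
        ring
      rw [this, key i n j, hg]
    rw [hL, hR, tri n g]
    apply Finset.sum_congr rfl
    intro i hi
    rw [Finset.mem_range] at hi
    apply Finset.sum_subset (Finset.range_subset_range.2 (by omega))
    intro j _ hj
    rw [Finset.mem_range, not_lt] at hj
    rw [hg]
    simp only
    rw [Nat.choose_eq_zero_of_lt (by omega)]
    simp
  · intro n hn t
    obtain ⟨m, rfl⟩ : ∃ m, n = m + 1 := ⟨n - 1, by omega⟩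
    simp only [Nat.add_sub_cancel]
    rw [laguerre, laguerre1, laguerre1]
    rw [Finset.sum_range_succ, Finset.sum_range_succ ((fun k =>
      ((m + 1 + 1).choose (m + 1 - k) : ℝ) * (-t) ^ k / (Nat.factorial k : ℝ)))]
    simp only [Nat.choose_self, Nat.sub_self, Nat.choose_zero_right, Nat.cast_one, one_mul]
    have hmain : ∑ k ∈ range (m+1), ((m+1).choose k : ℝ) * (-t) ^ k / (Nat.factorial k : ℝ)
        = ∑ k ∈ range (m+1), ((m+2).choose (m+1-k) : ℝ) * (-t) ^ k / (Nat.factorial k : ℝ)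
          - ∑ k ∈ range (m+1), ((m+1).choose (m-k) : ℝ) * (-t) ^ k / (Nat.factorial k : ℝ) := by
      rw [← Finset.sum_sub_distrib]
      apply Finset.sum_congr rfl
      intro k hk
      rw [Finset.mem_range] at hk
      have hk' : k ≤ m := by omega
      have h1 : (m+2).choose (m+1-k) = (m+1).choose (m-k) + (m+1).choose (m+1-k) := by
        have : m + 1 - k = (m - k) + 1 := by omega
        rw [this, Nat.choose_succ_succ]
      have h2 : (m+1).choose (m+1-k) = (m+1).choose k := by
        have : m + 1 - k = (m+1) - k := by omega
        rw [this, Nat.choose_symm (by omega)]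
      rw [h1, h2]
      push_cast
      ring
    rw [hmain]
    ring
end
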